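/- If H is an induced subgraph of Q_n isomorphic to Q_k, and x, x+ε_i, and y are vertices of H (where x+ε_i flips coordinate i of x), then y+ε_i is also a vertex of H. -/

import Mathlib

/-- The hypercube graph `Q_n` on binary strings of length `n`:
two strings are adjacent iff they differ in exactly one coordinate. -/
def Qgraph (n : ℕ) : SimpleGraph (Fin n → Bool) where
  Adj x y := hammingDist x y = 1
  symm := ⟨fun x y (h : hammingDist x y = 1) => show hammingDist y x = 1 from (hammingDist_comm y x).trans h⟩
  loopless := ⟨fun x (h : hammingDist x x = 1) => by rw [hammingDist_self] at h; exact absurd h (by omega)⟩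

/-- The weight of a binary string: its number of `1`s. -/
def wt {n : ℕ} (x : Fin n → Bool) : ℕ :=
  (Finset.univ.filter fun i => x i = true).card

/-- Fibonacci strings of length `n`: no two (cyclically non-wrapping) consecutive 1's. -/
def fibSet (n : ℕ) : Set (Fin n → Bool) :=
  {s | ∀ i j : Fin n, (j : ℕ) = (i : ℕ) + 1 → ¬(s i = true ∧ s j = true)}

/-- Lucas strings of length `n`: Fibonacci strings whose first and last bits are not both 1. -/
def lucasSet (n : ℕ) : Set (Fin n → Bool) :=
  {s | s ∈ fibSet n ∧
    ∀ i j : Fin n, (i : ℕ) = 0 → (j : ℕ) = n - 1 → ¬(s i = true ∧ s j = true)}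

/-- The binary string `0^{l_0} 1 0^{l_1} 1 ⋯ 1 0^{l_p}` determined by a list
of lengths of blocks of `0`'s. -/
def blockString (l : List ℕ) : List Bool :=
  List.intercalate [true] (l.map fun k => List.replicate k false)

/-- The vertex of `Q_n` corresponding to the string `0^{l_0} 1 0^{l_1} 1 ⋯ 1 0^{l_p}`. -/
def ofBlocks (n : ℕ) (l : List ℕ) : Fin n → Bool :=
  fun i => (blockString l).getD (i : ℕ) false

/-- `V` induces a maximal hypercube of dimension `p` inside the subgraph of `Q_n`
induced by the vertex set `S`. -/
def IsMaxCube (n p : ℕ) (S : Set (Fin n → Bool)) (V : Set (Fin n → Bool)) : Prop :=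
  V ⊆ S ∧ Nonempty ((Qgraph n).induce V ≃g Qgraph p) ∧
    ¬ ∃ V' : Set (Fin n → Bool), V ⊂ V' ∧ V' ⊆ S ∧
      Nonempty ((Qgraph n).induce V' ≃g Qgraph (p + 1))

/-- Binomial coefficient `a` choose `b` with an integer lower argument,
equal to `0` when `b < 0`. -/
def chooseZ (a : ℕ) (b : ℤ) : ℕ := if 0 ≤ b then a.choose b.toNat else 0


open Finset

namespace QAux

variable {n : ℕ}

def flip (x : Fin n → Bool) (i : Fin n) : Fin n → Bool := Function.update x i (!(x i))

@[simp] lemma flip_self (x : Fin n → Bool) (i : Fin n) : flip x i i = !(x i) := by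
  simp [flip]

lemma flip_ne (x : Fin n → Bool) {i j : Fin n} (h : j ≠ i) : flip x i j = x j := by
  simp [flip, Function.update_of_ne h]

lemma flip_flip (x : Fin n → Bool) (i : Fin n) : flip (flip x i) i = x := by
  funext j
  rcases eq_or_ne j i with rfl | h
  · simp
  · rw [flip_ne _ h, flip_ne _ h]

lemma flip_comm (x : Fin n → Bool) {i j : Fin n} (h : i ≠ j) :
    flip (flip x i) j = flip (flip x j) i := by
  funext k
  rcases eq_or_ne k i with rfl | hk
  · rw [flip_ne _ h, flip_self, flip_self, flip_ne _ h]
  · rcases eq_or_ne k j with rfl | hk2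
    · rw [flip_self, flip_ne _ hk, flip_ne _ hk, flip_self]
    · rw [flip_ne _ hk2, flip_ne _ hk, flip_ne _ hk, flip_ne _ hk2]

lemma filter_flip (x : Fin n → Bool) (i : Fin n) :
    ({j | x j ≠ flip x i j} : Finset (Fin n)) = {i} := by
  ext j
  rcases eq_or_ne j i with rfl | h
  · simp
  · simp [flip_ne _ h, h]

lemma adj_flip (x : Fin n → Bool) (i : Fin n) : (Qgraph n).Adj x (flip x i) := by
  show hammingDist x (flip x i) = 1
  rw [hammingDist, filter_flip]
  simp

lemma adj_iff {x y : Fin n → Bool} : (Qgraph n).Adj x y ↔ ∃ i, y = flip x i := by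
  constructor
  · intro h
    have h' : ({j | x j ≠ y j} : Finset (Fin n)).card = 1 := h
    obtain ⟨i, hi⟩ := Finset.card_eq_one.mp h'
    refine ⟨i, funext fun j => ?_⟩
    rcases eq_or_ne j i with rfl | hji
    · have : j ∈ ({j | x j ≠ y j} : Finset (Fin n)) := by rw [hi]; simp
      simp only [Finset.mem_filter] at this
      have hne : x j ≠ y j := by simpa using this
      rw [flip_self]
      cases hx : x j <;> cases hy : y j <;> simp_all
    · have : j ∉ ({j | x j ≠ y j} : Finset (Fin n)) := by rw [hi]; simpa using hji
      simp only [Finset.mem_filter, Finset.mem_univ, true_and] at this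
      have := not_not.mp (by simpa using this)
      rw [flip_ne _ hji, this]
  · rintro ⟨i, rfl⟩; exact adj_flip x i

lemma flip_ne_self (x : Fin n → Bool) (i : Fin n) : flip x i ≠ x :=
  fun h => by have := congrFun h i; simp at this

/-- uniqueness of the fourth vertex of a square in Q_n -/
lemma square_unique {z c : Fin n → Bool} {i j : Fin n} (hij : i ≠ j) (hc : c ≠ z)
    (h1 : (Qgraph n).Adj (flip z i) c) (h2 : (Qgraph n).Adj (flip z j) c) :
    c = flip (flip z i) j := by
  obtain ⟨p, rfl⟩ := adj_iff.mp h1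
  have hpi : p ≠ i := by rintro rfl; exact hc (flip_flip z p)
  rcases eq_or_ne p j with rfl | hpj
  · rfl
  · exfalso
    have h2' : ({m | flip z j m ≠ flip (flip z i) p m} : Finset (Fin n)).card = 1 := h2
    have hsub : ({i, p, j} : Finset (Fin n)) ⊆ ({m | flip z j m ≠ flip (flip z i) p m} : Finset (Fin n)) := by
      intro m hm
      simp only [Finset.mem_insert, Finset.mem_singleton] at hm
      simp only [Finset.mem_filter, Finset.mem_univ, true_and]
      rcases hm with rfl | rfl | rfl
      · rw [flip_ne _ hij, flip_ne _ (Ne.symm hpi), flip_self]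
        cases z m <;> simp
      · rw [flip_ne _ hpj, flip_self, flip_ne _ hpi]
        cases z m <;> simp
      · rw [flip_self, flip_ne _ (Ne.symm hpj), flip_ne _ (Ne.symm hij)]
        cases z m <;> simp
    have hcard : ({i, p, j} : Finset (Fin n)).card = 3 := by
      rw [Finset.card_insert_of_notMem (by simp [Ne.symm hpi, hij]),
        Finset.card_insert_of_notMem (by simp [hpj]), Finset.card_singleton]
    have := Finset.card_le_card hsub
    omega

/-- existence of the fourth vertex of a square -/
lemma square_exists {k : ℕ} {z a b : Fin k → Bool} (ha : (Qgraph k).Adj z a)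
    (hb : (Qgraph k).Adj z b) (hab : a ≠ b) :
    ∃ c, (Qgraph k).Adj a c ∧ (Qgraph k).Adj b c ∧ c ≠ z := by
  obtain ⟨p, rfl⟩ := adj_iff.mp ha
  obtain ⟨q, rfl⟩ := adj_iff.mp hb
  have hpq : p ≠ q := by rintro rfl; exact hab rfl
  refine ⟨flip (flip z p) q, adj_flip _ _, ?_, ?_⟩
  · rw [flip_comm z hpq]; exact adj_flip _ _
  · intro h
    have := congrFun h p
    rw [flip_ne _ hpq, flip_self] at this
    cases z p <;> simp_all

lemma preconnected (k : ℕ) : (Qgraph k).Preconnected := by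
  suffices h : ∀ d (x y : Fin k → Bool), hammingDist x y = d → (Qgraph k).Reachable x y by
    intro x y; exact h _ x y rfl
  intro d
  induction d with
  | zero => intro x y h; rw [hammingDist_eq_zero] at h; exact h ▸ SimpleGraph.Reachable.refl _
  | succ d ih =>
    intro x y h
    have hne : ({j | x j ≠ y j} : Finset (Fin k)).Nonempty := by
      rw [← Finset.card_pos]; show 0 < hammingDist x y; omega
    obtain ⟨i, hi⟩ := hne
    simp only [Finset.mem_filter, Finset.mem_univ, true_and] at hi
    have hyi : y i = !(x i) := by cases hx : x i <;> cases hy : y i <;> simp_all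
    have hstep : hammingDist (flip x i) y = d := by
      have : ({j | flip x i j ≠ y j} : Finset (Fin k))
          = ({j | x j ≠ y j} : Finset (Fin k)).erase i := by
        ext j
        rcases eq_or_ne j i with rfl | hj
        · simp [hyi]
        · simp [flip_ne _ hj, hj]
      show ({j | flip x i j ≠ y j} : Finset (Fin k)).card = d
      rw [this, Finset.card_erase_of_mem (by simpa using hi)]
      have : hammingDist x y = d + 1 := h
      rw [hammingDist] at this; omega
    exact ((adj_flip x i).reachable).trans (ih _ _ hstep)

end QAux

open QAux in
/-- If `x`, `x + ε_i` and `y` are vertices of an induced subgraph of `Q_n` isomorphic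
to `Q_k`, then so is `y + ε_i`. -/
theorem subcube_flip_closed (n k : ℕ) (V : Set (Fin n → Bool))
    (hiso : Nonempty ((Qgraph n).induce V ≃g Qgraph k))
    (x y : Fin n → Bool) (i : Fin n)
    (hx : x ∈ V) (hxi : Function.update x i (!(x i)) ∈ V) (hy : y ∈ V) :
    Function.update y i (!(y i)) ∈ V := by
  obtain ⟨φ⟩ := hiso
  -- one-step propagation
  have step : ∀ z w : V, (Qgraph n).Adj z.val w.val → flip z.val i ∈ V → flip w.val i ∈ V := by
    rintro ⟨z, hz⟩ ⟨w, hw⟩ hadj ha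
    obtain ⟨j, hwj⟩ := adj_iff.mp hadj
    simp only at hwj
    rcases eq_or_ne j i with rfl | hij
    · show flip w j ∈ V
      rw [hwj, QAux.flip_flip]; exact hz
    · -- a = flip z i, w = flip z j, use the square
      have haw : flip z i ≠ w := by
        intro h
        have := congrFun (h.trans hwj) i
        rw [flip_self, flip_ne _ hij.symm] at this
        cases z i <;> simp_all
      have hadj_a : ((Qgraph n).induce V).Adj ⟨z, hz⟩ ⟨flip z i, ha⟩ := adj_flip z i
      have hadj_w : ((Qgraph n).induce V).Adj ⟨z, hz⟩ ⟨w, hw⟩ := hadj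
      have hab : φ ⟨flip z i, ha⟩ ≠ φ ⟨w, hw⟩ := by
        intro h
        exact haw (congrArg Subtype.val (φ.injective h))
      obtain ⟨c', hc1, hc2, hc3⟩ := square_exists (φ.map_adj_iff.mpr hadj_a)
        (φ.map_adj_iff.mpr hadj_w) hab
      set c : V := φ.symm c' with hcdef
      have hac : ((Qgraph n).induce V).Adj ⟨flip z i, ha⟩ c := by
        rw [← φ.map_adj_iff]; simpa [hcdef] using hc1
      have hwc : ((Qgraph n).induce V).Adj ⟨w, hw⟩ c := by
        rw [← φ.map_adj_iff]; simpa [hcdef] using hc2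
      have hcz : c.val ≠ z := by
        intro h
        apply hc3
        have h2 : c = ⟨z, hz⟩ := Subtype.ext h
        calc c' = φ (φ.symm c') := (φ.apply_symm_apply c').symm
          _ = φ ⟨z, hz⟩ := by rw [← h2]
      have hceq : c.val = flip (flip z i) j := square_unique hij.symm hcz hac (hwj ▸ hwc)
      show flip w i ∈ V
      rw [hwj, ← flip_comm z hij.symm, ← hceq]
      exact c.property
  -- connectivity: transport preconnectedness through φ
  have hreach : ((Qgraph n).induce V).Reachable ⟨x, hx⟩ ⟨y, hy⟩ := by
    have := (preconnected k) (φ ⟨x, hx⟩) (φ ⟨y, hy⟩)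
    obtain ⟨p⟩ := this
    exact ⟨(p.map φ.symm.toHom).copy (by simp) (by simp)⟩
  obtain ⟨p⟩ := hreach
  have key : ∀ (a b : V) (p : ((Qgraph n).induce V).Walk a b),
      flip a.val i ∈ V → flip b.val i ∈ V := by
    intro a b p
    induction p with
    | nil => exact id
    | cons h p ih => intro hfa; exact ih (step _ _ h hfa)
  exact key ⟨x, hx⟩ ⟨y, hy⟩ p hxi
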